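/- If the weight function w(i,j) can be written as a finite sum w(i,j) = Σ_k f_k(i)·g_k(j), where each f_k is non-increasing and each g_k is non-decreasing, then the lexicographically-first cost-minimizing jump sequence a satisfies a(n-1) ≤ a(n) for all n ≥ 2. -/

import Mathlib

/-!
The weight `w(i,j) = Σ_k f_k(i) g_k(j)` satisfies the quadrangle inequality
`w(i,j) + w(i',j') ≤ w(i,j') + w(i',j)` for `i ≤ i' < j ≤ j'`, each summand contributing
`(f_k(i) - f_k(i')) (g_k(j') - g_k(j)) ≥ 0`. If `a(j') < a(j)` for some `j ≤ j'`, apply it with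
`i = a(j')`, `i' = a(j)`: exchanging the last jumps of the two optimal patterns costs no more in
total, so `a(j')` is also optimal for `j`, contradicting the minimality of `a(j)`.
-/

/-- Minimal cost `b(n)` of a jumping pattern from `n` down to `1`:
`b(1)=0` and `b(n) = min_{1 <= k < n} (w(k,n) + b(k))`. -/
noncomputable def minCost (w : ℕ → ℕ → ℝ) : ℕ → ℝ
  | 0 => 0
  | 1 => 0
  | (n+2) =>
    ((Finset.Icc 1 (n+1)).attach).inf'
      ⟨⟨1, by simp⟩, Finset.mem_attach _ _⟩
      (fun k => w k.1 (n+2) + minCost w k.1)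
decreasing_by
  have := Finset.mem_Icc.mp k.2; omega

/-- The lexicographically-first cost-minimizing jump sequence. -/
noncomputable def jumpSeq (w : ℕ → ℕ → ℝ) : ℕ → ℕ := fun n =>
  if n ≤ 1 then 1
  else sInf {k | 1 ≤ k ∧ k < n ∧ w k n + minCost w k = minCost w n}

open Finset

/-- The (Knuth–Yao) quadrangle inequality, on the pairs `1 ≤ i < j` where `w` is meaningful. -/
def QuadrangleInequality (w : ℕ → ℕ → ℝ) : Prop :=
  ∀ i i' j j', 1 ≤ i → i ≤ i' → i' < j → j ≤ j' → w i j + w i' j' ≤ w i j' + w i' j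

theorem quadrangleInequality_of_eq_sum_mul {m : ℕ} {w : ℕ → ℕ → ℝ} {F G : Fin m → ℕ → ℝ}
    (hF : ∀ k, Antitone (F k)) (hG : ∀ k, Monotone (G k))
    (hw : ∀ i j, 1 ≤ i → i < j → w i j = ∑ k, F k i * G k j) :
    QuadrangleInequality w := by
  intro i i' j j' hi hii' hi'j hjj'
  rw [hw i j hi (by omega), hw i' j' (by omega) (by omega), hw i j' hi (by omega),
    hw i' j (by omega) hi'j, ← sum_add_distrib, ← sum_add_distrib]
  exact sum_le_sum fun k _ => mul_add_mul_le_mul_add_mul' (hF k hii') (hG k hjj')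

section JumpSeq

variable (w : ℕ → ℕ → ℝ)

theorem minCost_le_add {k n : ℕ} (hk : 1 ≤ k) (hkn : k < n) :
    minCost w n ≤ w k n + minCost w k := by
  obtain ⟨p, rfl⟩ : ∃ p, n = p + 2 := ⟨n - 2, by omega⟩
  rw [minCost]
  exact inf'_le _ (mem_attach _ ⟨k, mem_Icc.mpr ⟨hk, by omega⟩⟩)

theorem exists_add_minCost_eq {n : ℕ} (hn : 2 ≤ n) :
    ∃ k, 1 ≤ k ∧ k < n ∧ w k n + minCost w k = minCost w n := by
  obtain ⟨p, rfl⟩ : ∃ p, n = p + 2 := ⟨n - 2, by omega⟩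
  obtain ⟨k, -, hk⟩ := exists_mem_eq_inf' (attach_nonempty_iff.mpr (nonempty_Icc.mpr (by omega)))
    (fun k : Icc 1 (p + 1) => w k.1 (p + 2) + minCost w k.1)
  obtain ⟨hk1, hkp⟩ := mem_Icc.mp k.2
  exact ⟨k.1, hk1, by omega, by rw [minCost]; exact hk.symm⟩

theorem jumpSeq_spec {n : ℕ} (hn : 2 ≤ n) :
    1 ≤ jumpSeq w n ∧ jumpSeq w n < n ∧
      w (jumpSeq w n) n + minCost w (jumpSeq w n) = minCost w n := by
  rw [jumpSeq, if_neg (by omega)]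
  exact Nat.sInf_mem (exists_add_minCost_eq w hn)

theorem jumpSeq_le_of_add_minCost_eq {k n : ℕ} (hk : 1 ≤ k) (hkn : k < n)
    (hopt : w k n + minCost w k = minCost w n) : jumpSeq w n ≤ k := by
  rw [jumpSeq, if_neg (by omega)]
  exact Nat.sInf_le ⟨hk, hkn, hopt⟩

theorem one_le_jumpSeq (n : ℕ) : 1 ≤ jumpSeq w n := by
  by_cases hn : n ≤ 1
  · simp [jumpSeq, hn]
  · exact (jumpSeq_spec w (by omega)).1

theorem jumpSeq_monotone (hw : QuadrangleInequality w) : Monotone (jumpSeq w) := by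
  intro j j' hjj'
  by_cases hj : j ≤ 1
  · simpa [jumpSeq, hj] using one_le_jumpSeq w j'
  by_contra! hlt
  set p := jumpSeq w j
  set q := jumpSeq w j'
  obtain ⟨hp1, hpj, hp⟩ := jumpSeq_spec w (n := j) (by omega)
  obtain ⟨hq1, -, hq⟩ := jumpSeq_spec w (n := j') (by omega)
  have hquad := hw q p j j' hq1 hlt.le hpj hjj'
  have hqj := minCost_le_add w hq1 (by omega : q < j)
  have hpj' := minCost_le_add w hp1 (by omega : p < j')
  have hq_opt : w q j + minCost w q = minCost w j := by linarith
  exact not_le.mpr hlt (jumpSeq_le_of_add_minCost_eq w hq1 (by omega) hq_opt)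

end JumpSeq

theorem stmt_0 (w : ℕ → ℕ → ℝ) (m : ℕ) (F G : Fin m → ℕ → ℝ)
    (hF : ∀ k, Antitone (F k)) (hG : ∀ k, Monotone (G k))
    (hw : ∀ i j, 1 ≤ i → i < j → w i j = ∑ k, F k i * G k j) :
    ∀ n, 2 ≤ n → jumpSeq w (n - 1) ≤ jumpSeq w n :=
  fun _ _ => jumpSeq_monotone w (quadrangleInequality_of_eq_sum_mul hF hG hw) (Nat.sub_le _ _)
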